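/- arXiv:2310.02455 — 8 statements merged into one kernel-verified Lean document; each statement's English description precedes it below -/
import Mathlib

section
/- Let f : R^s → R^s be a differentiable vector field whose image lies in a linear subspace S of R^s of dimension s−d, and let W be a d×s matrix whose rows form a basis of the orthogonal complement S^⊥. For a point x* with f(x*)=0, the following are equivalent: (i) ker(J(f)(x*)) ∩ S = {0}, where J(f)(x*) is the Jacobian of f at x*; (ii) there exist s−d coordinate functions f_{i_1},…,f_{i_{s-d}} spanning the linear span of f_1,…,f_s such that the s×s matrix whose first s−d rows are the gradients of f_{i_1},…,f_{i_{s-d}} at x* and whose last d rows are the rows of W has nonzero determinant. -/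
/-!
Condition (i) says that the stacked matrix `[J; W]` is injective, i.e. that the gradients of the
`fᵢ` at `x*` together with the rows of `W` span `ℝ^s`. The rows of `W` are independent, so `s - d`
of the gradients complete them to a basis (a basis of the quotient by the row space of `W`
extracted from the images of the gradients); this is the determinant condition. Conversely, an
invertible `[J_ι; W]` kills no nonzero `v ∈ S = ker W` with `J v = 0`. The selected coordinate
functions are linearly independent because their gradients are, while all the `fᵢ` span a space
of dimension at most `s - d`, since each row `w` of `W` gives the linear relation `w ⬝ᵥ f = 0`.
-/

open Module Submodule Set Matrix

section LinearAlgebra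

variable {K V : Type*} [Field K] [AddCommGroup V] [Module K V]

theorem exists_linearIndependent_sumElim_of_sup_eq_top [FiniteDimensional K V] {ι : Type*}
    {m d : ℕ} (hdim : finrank K V = m + d) (u : ι → V) {w : Fin d → V}
    (hw : LinearIndependent K w) (hspan : span K (range u) ⊔ span K (range w) = ⊤) :
    ∃ σ : Fin m → ι, LinearIndependent K (Sum.elim (u ∘ σ) w) := by
  set P := span K (range w)
  have hq : span K (range (P.mkQ ∘ u)) = ⊤ := by
    rw [range_comp, ← map_span, map_mkQ_eq_top, sup_comm, hspan]
  obtain ⟨κ, a, -, hsp, hli⟩ := exists_linearIndependent' K (P.mkQ ∘ u)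
  have := hli.finite
  have := Fintype.ofFinite κ
  have hcard : Fintype.card κ = m := by
    have hκ := finrank_span_eq_card hli
    rw [hsp, hq, finrank_top] at hκ
    have hquot := P.finrank_quotient_add_finrank
    rw [finrank_span_eq_card hw, Fintype.card_fin] at hquot
    omega
  let e := Fintype.equivFinOfCardEq hcard
  refine ⟨a ∘ e.symm, ?_⟩
  have hwP : LinearIndependent K (fun i => (⟨w i, subset_span ⟨i, rfl⟩⟩ : P)) :=
    .of_comp P.subtype hw
  have := (hwP.sumElim_of_quotient (u ∘ a ∘ e.symm) (hli.comp e.symm e.symm.injective)).comp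
    Sum.swap Sum.swap_leftInverse.injective
  rwa [Sum.elim_swap] at this

theorem span_range_comp_eq_of_linearIndependent {ι κ : Type*} [Finite ι] [Fintype κ]
    (v : ι → V) (σ : κ → ι) (hli : LinearIndependent K (v ∘ σ))
    (hcard : finrank K (span K (range v)) ≤ Fintype.card κ) :
    span K (range (v ∘ σ)) = span K (range v) :=
  have := FiniteDimensional.span_of_finite K (finite_range v)
  eq_of_le_of_finrank_le (span_mono (range_comp_subset_range σ v))
    (by rwa [finrank_span_eq_card hli])

end LinearAlgebra

namespace Matrix

variable {K : Type*} [Field K]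

theorem finrank_span_range_apply_add_le {X n : Type*} [Fintype n] (g : X → n → K) {d : ℕ}
    {W : Matrix (Fin d) n K} (hW : LinearIndependent K W.row) (hg : ∀ x, W *ᵥ g x = 0) :
    finrank K (span K (range fun i x => g x i)) + d ≤ Fintype.card n := by
  have hker : span K (range W.row) ≤ LinearMap.ker (of g).mulVecLin :=
    span_le.mpr <| range_subset_iff.mpr fun i =>
      funext fun x => (dotProduct_comm _ _).trans (congrFun (hg x) i)
  have hle := Submodule.finrank_mono hker
  have hrank := (of g).mulVecLin.finrank_range_add_finrank_ker
  rw [range_mulVecLin, finrank_fintype_fun_eq_card] at hrank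
  rw [finrank_span_eq_card hW, Fintype.card_fin] at hle
  exact (Nat.add_le_add_left hle _).trans hrank.le

theorem span_range_row_eq_top_of_ker_mulVecLin_eq_bot {m n : Type*} [Finite m] [Fintype n]
    {M : Matrix m n K} (h : LinearMap.ker M.mulVecLin = ⊥) : span K (range M.row) = ⊤ := by
  apply eq_top_of_finrank_eq
  have hrank := M.mulVecLin.finrank_range_add_finrank_ker
  rw [h, finrank_bot, add_zero] at hrank
  rw [← rank_eq_finrank_span_row]
  exact hrank

theorem span_range_row_sup_eq_top {m₁ m₂ n : Type*} [Finite m₁] [Finite m₂] [Fintype n]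
    {A : Matrix m₁ n K} {B : Matrix m₂ n K} (h : ∀ v, A *ᵥ v = 0 → B *ᵥ v = 0 → v = 0) :
    span K (range A.row) ⊔ span K (range B.row) = ⊤ := by
  have : span K (range (fromRows A B).row) = ⊤ :=
    span_range_row_eq_top_of_ker_mulVecLin_eq_bot <| ker_mulVecLin_eq_bot_iff.2 fun v hv => by
      rw [fromRows_mulVec] at hv
      exact h v (funext fun i => congrFun hv (.inl i)) (funext fun i => congrFun hv (.inr i))
  rwa [← span_union, ← Sum.elim_range]

variable {m₁ m₂ n : Type*} [Fintype n] [DecidableEq n]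
  (A : Matrix m₁ n K) (B : Matrix m₂ n K) (e : n ≃ m₁ ⊕ m₂)

theorem det_submatrix_fromRows_ne_zero_iff :
    ((fromRows A B).submatrix e id).det ≠ 0 ↔ LinearIndependent K (fromRows A B).row := by
  rw [← isUnit_iff_ne_zero, ← isUnit_iff_isUnit_det, ← linearIndependent_rows_iff_isUnit]
  exact linearIndependent_equiv e

theorem eq_zero_of_det_submatrix_fromRows_ne_zero (h : ((fromRows A B).submatrix e id).det ≠ 0)
    {v : n → K} (hA : A *ᵥ v = 0) (hB : B *ᵥ v = 0) : v = 0 := by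
  refine mulVec_injective_iff_isUnit.mpr ((isUnit_iff_isUnit_det _).mpr h.isUnit) ?_
  rw [mulVec_zero]
  ext i
  change (fromRows A B *ᵥ v) (e i) = 0
  rw [fromRows_mulVec, hA, hB]
  cases e i <;> rfl

end Matrix

section Calculus

variable {𝕜 E : Type*} [NontriviallyNormedField 𝕜] [NormedAddCommGroup E] [NormedSpace 𝕜 E]
  {κ ι : Type*} [Fintype κ] {x : E}

theorem linearIndependent_of_linearIndependent_fderiv_apply {g : κ → E → 𝕜}
    (hg : ∀ k, DifferentiableAt 𝕜 (g k) x) (v : ι → E)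
    (h : LinearIndependent 𝕜 fun k j => fderiv 𝕜 (g k) x (v j)) : LinearIndependent 𝕜 g := by
  rw [Fintype.linearIndependent_iff] at h ⊢
  intro a ha
  have hderiv : HasFDerivAt (∑ k, a k • g k) (∑ k, a k • fderiv 𝕜 (g k) x) x := by
    simpa using HasFDerivAt.sum fun k _ => (hg k).hasFDerivAt.const_smul (a k)
  rw [ha] at hderiv
  have hzero := hderiv.unique (hasFDerivAt_const 0 x)
  refine h a (funext fun j => ?_)
  simpa using congrArg (fun L => L (v j)) hzero

theorem linearIndependent_apply_of_linearIndependent_fderiv_apply {n : Type*} [Fintype n]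
    {f : E → n → 𝕜} (hf : DifferentiableAt 𝕜 f x) (σ : κ → n) (v : ι → E)
    (h : LinearIndependent 𝕜 fun k j => fderiv 𝕜 f x (v j) (σ k)) :
    LinearIndependent 𝕜 fun k y => f y (σ k) := by
  refine linearIndependent_of_linearIndependent_fderiv_apply
    (fun k => differentiableAt_pi.1 hf (σ k)) v ?_
  simpa only [fderiv_apply hf, ContinuousLinearMap.comp_apply, ContinuousLinearMap.proj_apply]
    using h

end Calculus

/-- Characterization of non-degenerate steady states: (i) ker(J(f)(x*)) ∩ S = {0}
iff (ii) there are s−d coordinate functions of f spanning the span of all coordinates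
such that the square matrix built from their gradients at x* and the rows of W has
nonzero determinant. -/
theorem stmt_1 {s d : ℕ} (hd : d ≤ s)
    (f : (Fin s → ℝ) → (Fin s → ℝ)) (hf : Differentiable ℝ f)
    (S : Submodule ℝ (Fin s → ℝ))
    (hfS : ∀ x, f x ∈ S)
    (W : Matrix (Fin d) (Fin s) ℝ)
    (hW : LinearIndependent ℝ (fun i => W i))
    (hSW : ∀ v, v ∈ S ↔ W.mulVec v = 0)
    (xs : Fin s → ℝ) :
    (∀ v ∈ S, (Matrix.of fun i j => fderiv ℝ f xs (Pi.single j 1) i).mulVec v = 0 → v = 0)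
    ↔ ∃ ι : Fin (s - d) → Fin s,
        Submodule.span ℝ (Set.range (fun k => fun x => f x (ι k)))
          = Submodule.span ℝ (Set.range (fun i => fun x : Fin s → ℝ => f x i)) ∧
        ((Matrix.fromRows
            (Matrix.of fun k j => fderiv ℝ f xs (Pi.single j 1) (ι k))
            W).submatrix
          (finSumFinEquiv.trans (finCongr (by omega : s - d + d = s))).symm id).det ≠ 0 := by
  set J : Matrix (Fin s) (Fin s) ℝ := Matrix.of fun i j => fderiv ℝ f xs (Pi.single j 1) i
  constructor
  · intro hnondeg
    have hspan : span ℝ (range J.row) ⊔ span ℝ (range W.row) = ⊤ :=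
      span_range_row_sup_eq_top fun v hJ hW => hnondeg v ((hSW v).2 hW) hJ
    obtain ⟨ι, hli⟩ := exists_linearIndependent_sumElim_of_sup_eq_top (m := s - d)
      (by rw [finrank_fin_fun]; omega) J.row hW hspan
    refine ⟨ι, span_range_comp_eq_of_linearIndependent (fun i (x : Fin s → ℝ) => f x i) ι ?_ ?_,
      (det_submatrix_fromRows_ne_zero_iff (J.submatrix ι id) W _).mpr hli⟩
    · exact linearIndependent_apply_of_linearIndependent_fderiv_apply (hf xs) ι
        (fun j => Pi.single j 1) (hli.comp Sum.inl Sum.inl_injective)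
    · have := finrank_span_range_apply_add_le f hW fun x => (hSW _).1 (hfS x)
      rw [Fintype.card_fin] at this ⊢
      omega
  · rintro ⟨ι, -, hdet⟩ v hv hJv
    exact eq_zero_of_det_submatrix_fromRows_ne_zero _ _ _ hdet
      (funext fun k => congrFun hJv (ι k)) ((hSW v).1 hv)
end

section
/- Let m_1,…,m_{s-d} ∈ Z^s and let ℓ_1,…,ℓ_d be homogeneous linear forms on R^s with coefficient matrix W ∈ R^{d×s}. Define B(x) as the determinant of the s×s matrix with first s−d rows equal to Exp^t (rows m_1^t,…,m_{s-d}^t) and last d rows equal to Wx (with (Wx)_{ij}=W_{ij}x_j). Then there exist two distinct points x, y ∈ R^s_{>0} satisfying x^{m_i} = y^{m_i} for all i = 1,…,s−d and ℓ_j(x) = ℓ_j(y) for all j = 1,…,d, if and only if either B is the zero polynomial or B has two coefficients of opposite signs. -/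
/-!
Write a pair of positive points as `x = y * exp v`, i.e. `v = log x - log y`. The monomial
conditions say exactly that `v` is killed by the rows of `Expᵀ`, and the linear conditions that
`W` kills `x - y = z * v`, where `z j > 0` is the logarithmic mean of `x j` and `y j`; conversely
every pair `(z, v)` with `z > 0` comes from a pair of positive points. So two distinct points exist
iff the matrix with rows `Expᵀ` and `W * diagonal z` is singular for some `z > 0`, i.e. iff `B` has
a zero in the open positive orthant.

Each variable `x j` occurs only in column `j`, so `B` is multilinear. Every exponent `e` of a
multilinear polynomial is then exposed: along `x = exp (t * (2 * e - 1))` its monomial dominates as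
`t → ∞`, so `B` takes the sign of each of its coefficients somewhere in the orthant. The orthant
being connected, `B` has a zero there iff it is zero or has coefficients of both signs.
-/

open MvPolynomial

/-- The critical polynomial B(x). -/
noncomputable def Bpoly {s d : ℕ} (hd : d ≤ s)
    (Exp : Matrix (Fin s) (Fin (s - d)) ℤ) (W : Matrix (Fin d) (Fin s) ℝ) :
    MvPolynomial (Fin s) ℝ :=
  ((Matrix.fromRows
      (Matrix.of fun i j => (C ((Exp j i : ℤ) : ℝ) : MvPolynomial (Fin s) ℝ))
      (Matrix.of fun i j => C (W i j) * X j)).submatrix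
    (finSumFinEquiv.trans (finCongr (Nat.sub_add_cancel hd))).symm id).det

open Filter Topology Matrix

lemma eventually_pos_sum_mul_exp {ι : Type*} {S : Finset ι} (c E : ι → ℝ) {i₀ : ι}
    (hi₀ : i₀ ∈ S) (hc : 0 < c i₀) (hE : ∀ i ∈ S, i ≠ i₀ → E i < E i₀) :
    ∀ᶠ t in atTop, 0 < ∑ i ∈ S, c i * Real.exp (t * E i) := by
  classical
  have hlim : Tendsto (fun t => ∑ i ∈ S, c i * Real.exp (t * (E i - E i₀))) atTop
      (𝓝 (∑ i ∈ S, if i = i₀ then c i₀ else 0)) := by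
    refine tendsto_finsetSum _ fun i hi => ?_
    split_ifs with h
    · simp [h]
    · simpa using (Real.tendsto_exp_atBot.comp
        (tendsto_id.atTop_mul_const_of_neg (sub_neg.2 (hE i hi h)))).const_mul (c i)
  rw [Finset.sum_ite_eq', if_pos hi₀] at hlim
  filter_upwards [hlim.eventually (lt_mem_nhds hc)] with t ht
  have hsplit : ∑ i ∈ S, c i * Real.exp (t * E i) =
      Real.exp (t * E i₀) * ∑ i ∈ S, c i * Real.exp (t * (E i - E i₀)) := by
    rw [Finset.mul_sum]
    refine Finset.sum_congr rfl fun i _ => ?_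
    rw [mul_left_comm, ← Real.exp_add]
    ring_nf
  rw [hsplit]
  exact mul_pos (Real.exp_pos _) ht

section SignPattern

variable {σ : Type*}

lemma exists_pos_eval_eq_zero_of_pos_of_neg (p : MvPolynomial σ ℝ) {x y : σ → ℝ}
    (hx : ∀ j, 0 < x j) (hy : ∀ j, 0 < y j) (hpx : eval x p < 0) (hpy : 0 < eval y p) :
    ∃ z : σ → ℝ, (∀ j, 0 < z j) ∧ eval z p = 0 := by
  have horthant : IsPreconnected (Set.univ.pi fun _ : σ => Set.Ioi (0 : ℝ)) :=
    (convex_pi fun _ _ => convex_Ioi 0).isPreconnected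
  obtain ⟨z, hz, hz0⟩ := horthant.intermediate_value (Set.mem_univ_pi.mpr hx)
    (Set.mem_univ_pi.mpr hy) (continuous_eval p).continuousOn ⟨hpx.le, hpy.le⟩
  exact ⟨z, Set.mem_univ_pi.mp hz, hz0⟩

variable [Fintype σ]

lemma eval_exp_mul_eq_sum (p : MvPolynomial σ ℝ) (u : σ → ℝ) (t : ℝ) :
    eval (fun j => Real.exp (t * u j)) p =
      ∑ e ∈ p.support, p.coeff e * Real.exp (t * ∑ j, u j * e j) := by
  rw [eval_eq']
  refine Finset.sum_congr rfl fun e _ => ?_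
  rw [Finset.mul_sum, Real.exp_sum]
  congr 1
  refine Finset.prod_congr rfl fun j _ => ?_
  rw [← Real.exp_nat_mul]
  ring_nf

lemma sum_two_mul_sub_one_mul_lt_of_ne {e₀ e : σ →₀ ℕ} (h₀ : ∀ j, e₀ j ≤ 1)
    (h : ∀ j, e j ≤ 1) (hne : e ≠ e₀) :
    ∑ j, (2 * e₀ j - 1 : ℝ) * e j < ∑ j, (2 * e₀ j - 1 : ℝ) * e₀ j := by
  obtain ⟨j, hj⟩ := DFunLike.ne_iff.mp hne
  refine Finset.sum_lt_sum (fun i _ => ?_) ⟨j, Finset.mem_univ _, ?_⟩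
  · have := h₀ i; have := h i
    interval_cases e₀ i <;> interval_cases e i <;> norm_num
  · have := h₀ j; have := h j
    interval_cases e₀ j <;> interval_cases e j <;> simp_all

lemma exists_pos_eval_pos_of_coeff_pos {p : MvPolynomial σ ℝ} (hp : ∀ j, p.degreeOf j ≤ 1)
    {e₀ : σ →₀ ℕ} (hc : 0 < p.coeff e₀) : ∃ x : σ → ℝ, (∀ j, 0 < x j) ∧ 0 < eval x p := by
  have hdeg : ∀ e ∈ p.support, ∀ j, e j ≤ 1 := fun e he j => degreeOf_le_iff.mp (hp j) e he
  have he₀ : e₀ ∈ p.support := mem_support_iff.mpr hc.ne'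
  obtain ⟨t, ht⟩ := (eventually_pos_sum_mul_exp p.coeff
    (fun e => ∑ j, (2 * e₀ j - 1 : ℝ) * e j) he₀ hc fun e he hne =>
      sum_two_mul_sub_one_mul_lt_of_ne (hdeg e₀ he₀) (hdeg e he) hne).exists
  exact ⟨_, fun j => Real.exp_pos _, (eval_exp_mul_eq_sum p _ t).symm ▸ ht⟩

lemma eval_pos_of_coeff_nonneg {p : MvPolynomial σ ℝ} (hp : p ≠ 0) (hnn : ∀ e, 0 ≤ p.coeff e)
    {x : σ → ℝ} (hx : ∀ j, 0 < x j) : 0 < eval x p := by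
  obtain ⟨e₀, he₀⟩ := ne_zero_iff.mp hp
  rw [eval_eq']
  refine Finset.sum_pos'
    (fun e _ => mul_nonneg (hnn e) (Finset.prod_nonneg fun j _ => pow_nonneg (hx j).le _))
    ⟨e₀, mem_support_iff.mpr he₀, mul_pos ((hnn e₀).lt_of_ne' he₀) ?_⟩
  exact Finset.prod_pos fun j _ => pow_pos (hx j) _

lemma exists_pos_eval_eq_zero_iff {p : MvPolynomial σ ℝ} (hp : ∀ j, p.degreeOf j ≤ 1) :
    (∃ x : σ → ℝ, (∀ j, 0 < x j) ∧ eval x p = 0) ↔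
      p = 0 ∨ ∃ e₁ e₂ : σ →₀ ℕ, 0 < p.coeff e₁ ∧ p.coeff e₂ < 0 := by
  have hneg : ∀ j, (-p).degreeOf j ≤ 1 := fun j => (degreeOf_neg j p).symm ▸ hp j
  constructor
  · rintro ⟨x, hx, hx0⟩
    by_contra! h
    obtain ⟨hp0, hsign⟩ := h
    by_cases hpos : ∃ e, 0 < p.coeff e
    · obtain ⟨e, he⟩ := hpos
      exact (eval_pos_of_coeff_nonneg hp0 (hsign e · he) hx).ne' hx0
    · push Not at hpos
      have := eval_pos_of_coeff_nonneg (neg_ne_zero.mpr hp0)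
        (fun e => by simpa using hpos e) hx
      simp [hx0] at this
  · rintro (rfl | ⟨e₁, e₂, h₁, h₂⟩)
    · exact ⟨1, fun _ => one_pos, map_zero _⟩
    · obtain ⟨x, hx, hpx⟩ := exists_pos_eval_pos_of_coeff_pos hneg
        (e₀ := e₂) (by simpa using h₂)
      obtain ⟨y, hy, hpy⟩ := exists_pos_eval_pos_of_coeff_pos hp h₁
      exact exists_pos_eval_eq_zero_of_pos_of_neg p hx hy (by simpa using hpx) hpy

end SignPattern

lemma degreeOf_det_le_one {n R : Type*} [Fintype n] [DecidableEq n] [CommRing R]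
    (M : Matrix n n (MvPolynomial n R))
    (hM : ∀ i j k, (M i j).degreeOf k ≤ if j = k then 1 else 0) (k : n) :
    M.det.degreeOf k ≤ 1 := by
  rw [det_apply']
  refine (degreeOf_sum_le k _ _).trans (Finset.sup_le fun τ _ => ?_)
  calc ((Equiv.Perm.sign τ : ℤ) * ∏ i, M (τ i) i).degreeOf k
      = (C ((Equiv.Perm.sign τ : ℤ) : R) * ∏ i, M (τ i) i).degreeOf k := by rw [map_intCast]
    _ ≤ ∑ i, (M (τ i) i).degreeOf k :=
      (degreeOf_C_mul_le _ k _).trans (degreeOf_prod_le k _ _)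
    _ ≤ ∑ i, if i = k then 1 else 0 := Finset.sum_le_sum fun i _ => hM _ _ _
    _ = 1 := by simp

lemma det_submatrix_fromRows_eq_zero_iff {K m₁ m₂ n : Type*} [Field K] [Fintype n]
    [DecidableEq n] (A : Matrix m₁ n K) (B : Matrix m₂ n K) (e : n ≃ m₁ ⊕ m₂) :
    ((fromRows A B).submatrix e id).det = 0 ↔ ∃ v ≠ 0, A *ᵥ v = 0 ∧ B *ᵥ v = 0 := by
  have hmulVec : ∀ v, (fromRows A B).submatrix e id *ᵥ v = Sum.elim (A *ᵥ v) (B *ᵥ v) ∘ e :=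
    fun v => by rw [← fromRows_mulVec]; rfl
  simp only [← exists_mulVec_eq_zero_iff, hmulVec, funext_iff, Function.comp_apply,
    e.forall_congr_left, Equiv.apply_symm_apply, Sum.forall, Sum.elim_inl, Sum.elim_inr,
    Pi.zero_apply]

lemma exists_pos_mul_log_sub_log_eq_sub {a b : ℝ} (ha : 0 < a) (hb : 0 < b) :
    ∃ z, 0 < z ∧ z * (Real.log a - Real.log b) = a - b := by
  rcases lt_trichotomy a b with h | rfl | h
  · have hlog : Real.log a - Real.log b < 0 := sub_neg.2 (Real.log_lt_log ha h)
    exact ⟨_, div_pos_of_neg_of_neg (sub_neg.2 h) hlog, div_mul_cancel₀ _ hlog.ne⟩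
  · exact ⟨1, one_pos, by simp⟩
  · have hlog : 0 < Real.log a - Real.log b := sub_pos.2 (Real.log_lt_log hb h)
    exact ⟨_, div_pos (sub_pos.2 h) hlog, div_mul_cancel₀ _ hlog.ne'⟩

lemma exists_log_sub_log_eq {z : ℝ} (hz : 0 < z) (v : ℝ) :
    ∃ a b, 0 < a ∧ 0 < b ∧ Real.log a - Real.log b = v ∧ a - b = z * v := by
  rcases eq_or_ne v 0 with rfl | hv
  · exact ⟨1, 1, one_pos, one_pos, by simp, by simp⟩
  have hq : 0 < v / (Real.exp v - 1) := by
    rcases hv.lt_or_gt with h | h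
    · exact div_pos_of_neg_of_neg h (sub_neg.2 (Real.exp_lt_one_iff.2 h))
    · exact div_pos h (sub_pos.2 (Real.one_lt_exp_iff.2 h))
  have hb : 0 < z * (v / (Real.exp v - 1)) := mul_pos hz hq
  refine ⟨_, _, mul_pos hb (Real.exp_pos v), hb, ?_, ?_⟩
  · rw [Real.log_mul hb.ne' (Real.exp_pos v).ne', Real.log_exp]
    ring
  · have : Real.exp v - 1 ≠ 0 := sub_ne_zero.2 (by simpa using hv)
    field_simp

lemma prod_zpow_eq_prod_zpow_iff {σ : Type*} [Fintype σ] {x y : σ → ℝ} (hx : ∀ j, 0 < x j)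
    (hy : ∀ j, 0 < y j) (e : σ → ℤ) :
    ∏ j, x j ^ e j = ∏ j, y j ^ e j ↔
      ∑ j, (e j : ℝ) * (Real.log (x j) - Real.log (y j)) = 0 := by
  have hlog : ∀ w : σ → ℝ, (∀ j, 0 < w j) →
      Real.log (∏ j, w j ^ e j) = ∑ j, (e j : ℝ) * Real.log (w j) := fun w hw => by
    rw [Real.log_prod fun j _ => (zpow_pos (hw j) _).ne']
    simp only [Real.log_zpow]
  have hpos : ∀ w : σ → ℝ, (∀ j, 0 < w j) → ∏ j, w j ^ e j ∈ Set.Ioi 0 :=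
    fun w hw => Finset.prod_pos fun j _ => zpow_pos (hw j) _
  rw [← Real.log_injOn_pos.eq_iff (hpos x hx) (hpos y hy), hlog x hx, hlog y hy,
    ← sub_eq_zero, ← Finset.sum_sub_distrib]
  simp only [mul_sub]

lemma exists_ne_fiber_iff_exists_kernel {σ ι κ : Type*} [Fintype σ] (E : Matrix σ ι ℤ)
    (W : Matrix κ σ ℝ) :
    (∃ x y : σ → ℝ, (∀ j, 0 < x j) ∧ (∀ j, 0 < y j) ∧ x ≠ y ∧
      (∀ i, (∏ j, x j ^ E j i) = ∏ j, y j ^ E j i) ∧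
      (∀ a, (∑ j, W a j * x j) = ∑ j, W a j * y j)) ↔
    ∃ z : σ → ℝ, (∀ j, 0 < z j) ∧ ∃ v ≠ 0, Eᵀ.map (↑) *ᵥ v = 0 ∧ W *ᵥ (z * v) = 0 := by
  have hW : ∀ x y : σ → ℝ,
      (∀ a, (∑ j, W a j * x j) = ∑ j, W a j * y j) ↔ W *ᵥ (x - y) = 0 := by
    intro x y
    rw [mulVec_sub, sub_eq_zero, funext_iff]
    rfl
  have hE : ∀ x y : σ → ℝ, (∀ j, 0 < x j) → (∀ j, 0 < y j) →
      ((∀ i, (∏ j, x j ^ E j i) = ∏ j, y j ^ E j i) ↔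
        Eᵀ.map (↑) *ᵥ (fun j => Real.log (x j) - Real.log (y j)) = 0) := fun x y hx hy => by
    rw [funext_iff]
    exact forall_congr' fun i => prod_zpow_eq_prod_zpow_iff hx hy _
  constructor
  · rintro ⟨x, y, hx, hy, hxy, hmon, hlin⟩
    choose z hz hzv using fun j => exists_pos_mul_log_sub_log_eq_sub (hx j) (hy j)
    refine ⟨z, hz, _, fun hv => hxy (funext fun j => ?_), (hE x y hx hy).1 hmon, ?_⟩
    · simpa [congrFun hv j, sub_eq_zero] using (hzv j).symm
    · rw [show z * _ = x - y from funext hzv]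
      exact (hW x y).1 hlin
  · rintro ⟨z, hz, v, hv, hEv, hWv⟩
    choose x y hx hy hlog hsub using fun j => exists_log_sub_log_eq (hz j) (v j)
    have hv' : (fun j => Real.log (x j) - Real.log (y j)) = v := funext hlog
    refine ⟨x, y, hx, hy, ?_, (hE x y hx hy).2 (hv' ▸ hEv), (hW x y).2 ?_⟩
    · rintro rfl
      exact hv (by simpa [funext_iff] using hv'.symm)
    · rwa [show x - y = z * v from funext hsub]

lemma degreeOf_Bpoly_le_one {s d : ℕ} (hd : d ≤ s) (Exp : Matrix (Fin s) (Fin (s - d)) ℤ)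
    (W : Matrix (Fin d) (Fin s) ℝ) (k : Fin s) : (Bpoly hd Exp W).degreeOf k ≤ 1 := by
  refine degreeOf_det_le_one _ (fun r j k => ?_) k
  obtain ⟨i | a, rfl⟩ := (finSumFinEquiv.trans (finCongr (Nat.sub_add_cancel hd))).surjective r <;>
    simp only [submatrix_apply, Equiv.symm_apply_apply, fromRows_apply_inl, fromRows_apply_inr,
      of_apply, id]
  · exact (degreeOf_C _ k).trans_le (Nat.zero_le _)
  · refine (degreeOf_C_mul_le _ k _).trans ?_
    simp [degreeOf_X, eq_comm]

lemma eval_Bpoly {s d : ℕ} (hd : d ≤ s) (Exp : Matrix (Fin s) (Fin (s - d)) ℤ)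
    (W : Matrix (Fin d) (Fin s) ℝ) (x : Fin s → ℝ) :
    eval x (Bpoly hd Exp W) = ((fromRows (Expᵀ.map (↑)) (W * diagonal x)).submatrix
      (finSumFinEquiv.trans (finCongr (Nat.sub_add_cancel hd))).symm id).det := by
  rw [Bpoly, RingHom.map_det]
  congr 1
  ext r j
  obtain ⟨i | a, rfl⟩ := (finSumFinEquiv.trans (finCongr (Nat.sub_add_cancel hd))).surjective r <;>
    simp

lemma eval_Bpoly_eq_zero_iff {s d : ℕ} (hd : d ≤ s) (Exp : Matrix (Fin s) (Fin (s - d)) ℤ)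
    (W : Matrix (Fin d) (Fin s) ℝ) (x : Fin s → ℝ) :
    eval x (Bpoly hd Exp W) = 0 ↔ ∃ v ≠ 0, Expᵀ.map (↑) *ᵥ v = 0 ∧ W *ᵥ (x * v) = 0 := by
  have hdiag : ∀ v, diagonal x *ᵥ v = x * v := fun v => funext (mulVec_diagonal x v)
  rw [eval_Bpoly, det_submatrix_fromRows_eq_zero_iff]
  simp only [← mulVec_mulVec, hdiag]

/-- There exist two distinct positive points with equal monomials x^{m_i} and equal
linear forms ℓ_j iff B is zero or has two coefficients of opposite signs. -/
theorem stmt_4 {s d : ℕ} (hd : d ≤ s)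
    (Exp : Matrix (Fin s) (Fin (s - d)) ℤ) (W : Matrix (Fin d) (Fin s) ℝ) :
    (∃ x y : Fin s → ℝ, (∀ j, 0 < x j) ∧ (∀ j, 0 < y j) ∧ x ≠ y ∧
      (∀ i : Fin (s - d), (∏ j, x j ^ Exp j i) = ∏ j, y j ^ Exp j i) ∧
      (∀ a : Fin d, (∑ j, W a j * x j) = ∑ j, W a j * y j))
    ↔ (Bpoly hd Exp W = 0 ∨
        ∃ d1 d2 : Fin s →₀ ℕ,
          0 < (Bpoly hd Exp W).coeff d1 ∧ (Bpoly hd Exp W).coeff d2 < 0) := by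
  rw [exists_ne_fiber_iff_exists_kernel,
    ← exists_pos_eval_eq_zero_iff (degreeOf_Bpoly_le_one hd Exp W)]
  simp only [eval_Bpoly_eq_zero_iff]
end

section
/- Let G be a directed cactus graph with n vertices and r edges (a strongly connected digraph in which every edge lies in exactly one directed cycle, equivalently there is a unique directed path between any two vertices), and let I_G ∈ Z^{n×r} be its incidence matrix (column of edge e = u→v has −1 in row u, +1 in row v, zeros elsewhere). Then there exists an invertible matrix K ∈ Q^{n×n} such that each of the first n−1 rows of K · I_G has exactly two nonzero entries, and these two entries have opposite signs. -/
/-!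
Root the graph at `ρ` and say that `w` dominates `u` when every walk from `ρ` to `u` passes
through `w`; domination is a partial order. For `w ≠ ρ`, an edge entering the set `D(w)` of
vertices dominated by `w` must end at `w`, and there is exactly one such edge: the cycle of any of
them also contains the first edge of a walk from `w` back to `ρ` that never returns to `w`, so two
of them would lie on one cycle, which has only one edge into `w`. Each edge lies on exactly one
cycle, so following every edge by the next edge of its cycle is a bijection: the graph is Eulerian
and every vertex set is entered and left by equally many edges. So exactly one edge leaves `D(w)`,
and the indicator row of `D(w)` times the incidence matrix has a single `1`, a single `-1` and
zeros elsewhere. These rows for `w ≠ ρ`, together with the unit row at `ρ`, form a matrix that is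
triangular with respect to domination, hence invertible.
-/

/-- A directed walk from `a` to `b` along the edge list `es` in the digraph with
source map `src` and target map `tgt`. -/
def IsWalk {n r : ℕ} (src tgt : Fin r → Fin n) : Fin n → Fin n → List (Fin r) → Prop
  | a, b, [] => a = b
  | a, b, e :: es => src e = a ∧ IsWalk src tgt (tgt e) b es

/-- A directed cycle: a nonempty closed walk visiting pairwise distinct vertices. -/
def IsCycle {n r : ℕ} (src tgt : Fin r → Fin n) (es : List (Fin r)) : Prop :=
  es ≠ [] ∧ (∃ a, IsWalk src tgt a a es) ∧ (es.map src).Nodup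

/-- The incidence matrix of a digraph: column of edge e has −1 at its source and
+1 at its target. -/
def incidence {n r : ℕ} (src tgt : Fin r → Fin n) : Matrix (Fin n) (Fin r) ℚ :=
  Matrix.of fun v e => (if tgt e = v then 1 else 0) - (if src e = v then 1 else 0)


open Finset Matrix

lemma List.exists_eq_append_cons_append_cons_of_not_nodup_map {α β : Type*} {f : α → β}
    {l : List α} (h : ¬ (l.map f).Nodup) :
    ∃ l₁ x l₂ y l₃, l = l₁ ++ x :: l₂ ++ y :: l₃ ∧ f x = f y := by
  rw [List.Nodup, List.pairwise_map, List.pairwise_iff_forall_sublist] at h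
  push Not at h
  obtain ⟨x, y, hxy, hf⟩ := h
  obtain ⟨r₁, r₂, rfl, hx, hy⟩ := List.cons_sublist_iff.1 hxy
  obtain ⟨l₁, l₂, rfl⟩ := List.append_of_mem hx
  obtain ⟨l₃, l₄, rfl⟩ := List.append_of_mem (List.singleton_sublist.1 hy)
  exact ⟨l₁, x, l₂ ++ l₃, y, l₄, by simp, hf⟩

variable {n r : ℕ} {src tgt : Fin r → Fin n} {a b : Fin n} {es : List (Fin r)}

@[simp] lemma isWalk_nil : IsWalk src tgt a b [] ↔ a = b := Iff.rfl

@[simp] lemma isWalk_cons {e : Fin r} :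
    IsWalk src tgt a b (e :: es) ↔ src e = a ∧ IsWalk src tgt (tgt e) b es := Iff.rfl

lemma isWalk_append {es₁ es₂ : List (Fin r)} :
    IsWalk src tgt a b (es₁ ++ es₂) ↔ ∃ c, IsWalk src tgt a c es₁ ∧ IsWalk src tgt c b es₂ := by
  induction es₁ generalizing a with
  | nil => simp
  | cons e es ih => simp [ih, and_assoc]

lemma IsWalk.cons_map_tgt (h : IsWalk src tgt a b es) : a :: es.map tgt = es.map src ++ [b] := by
  induction es generalizing a with
  | nil => simpa using h
  | cons e es ih => obtain ⟨rfl, h⟩ := h; simp [ih h]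

lemma IsWalk.end_mem_support (h : IsWalk src tgt a b es) : b ∈ a :: es.map tgt := by
  simp [h.cons_map_tgt]

lemma IsWalk.src_mem_support (h : IsWalk src tgt a b es) {e : Fin r} (he : e ∈ es) :
    src e ∈ a :: es.map tgt := by
  rw [h.cons_map_tgt]
  exact List.mem_append_left _ (List.mem_map_of_mem he)

lemma IsWalk.perm_map_tgt_map_src (h : IsWalk src tgt a a es) :
    (es.map tgt).Perm (es.map src) :=
  (List.perm_cons a).1 (h.cons_map_tgt ▸ List.perm_append_singleton a _)

lemma IsWalk.exists_first_visit (h : IsWalk src tgt a b es) (p : Fin n → Prop)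
    (hp : ∃ v ∈ a :: es.map tgt, p v) :
    p a ∨ ∃ es₁ g es₂, es = es₁ ++ g :: es₂ ∧ IsWalk src tgt a (src g) es₁ ∧ p (tgt g) ∧
      ∀ v ∈ a :: es₁.map tgt, ¬ p v := by
  induction es generalizing a with
  | nil => simpa using hp
  | cons e es ih =>
    by_cases ha : p a
    · exact Or.inl ha
    obtain ⟨rfl, h⟩ := h
    obtain ⟨v, hv, hpv⟩ := hp
    have hp' : ∃ v ∈ tgt e :: es.map tgt, p v := by
      rcases List.mem_cons.1 hv with rfl | hv
      · exact absurd hpv ha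
      · exact ⟨v, hv, hpv⟩
    right
    rcases ih h hp' with hpe | ⟨es₁, g, es₂, rfl, h₁, hg, hav⟩
    · exact ⟨[], e, es, rfl, rfl, hpe, by simpa using ha⟩
    · refine ⟨e :: es₁, g, es₂, rfl, ⟨rfl, h₁⟩, hg, ?_⟩
      simpa [ha] using hav

lemma IsWalk.exists_isWalk_not_revisit (h : IsWalk src tgt a b es) {w : Fin n}
    (hw : w ∈ a :: es.map tgt) : ∃ es', IsWalk src tgt w b es' ∧ w ∉ es'.map tgt := by
  induction es generalizing a with
  | nil => exact ⟨[], (List.mem_singleton.1 hw).trans h, by simp⟩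
  | cons e es ih =>
    obtain ⟨rfl, h⟩ := h
    by_cases hw' : w ∈ tgt e :: es.map tgt
    · exact ih h hw'
    · obtain rfl : w = src e := by simpa [hw'] using hw
      exact ⟨e :: es, ⟨rfl, h⟩, by simpa using hw'⟩

lemma IsWalk.exists_isCycle (h : IsWalk src tgt a a es) {e : Fin r} (he : e ∈ es) :
    ∃ cs, IsCycle src tgt cs ∧ e ∈ cs ∧ cs ⊆ es := by
  induction hlen : es.length using Nat.strong_induction_on generalizing a es with
  | _ N ih =>
  by_cases hnd : (es.map src).Nodup
  · exact ⟨es, ⟨List.ne_nil_of_mem he, ⟨a, h⟩, hnd⟩, he, List.Subset.refl _⟩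
  -- cut the closed walk at a repeated vertex into two shorter closed walks
  obtain ⟨l₁, x, l₂, y, l₃, rfl, hxy⟩ :=
    List.exists_eq_append_cons_append_cons_of_not_nodup_map hnd
  obtain ⟨c, h₁₂, rfl, h₃⟩ := isWalk_append.1 h
  obtain ⟨b, h₁, rfl, h₂⟩ := isWalk_append.1 h₁₂
  have hinner : IsWalk src tgt (src x) (src x) (x :: l₂) := ⟨rfl, hxy ▸ h₂⟩
  have houter : IsWalk src tgt a a (l₁ ++ y :: l₃) := isWalk_append.2 ⟨_, h₁, hxy.symm, h₃⟩
  simp only [List.length_append, List.length_cons] at hlen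
  by_cases hex : e ∈ x :: l₂
  · obtain ⟨cs, hcs, hecs, hsub⟩ := ih _ (by simp; omega) hinner hex rfl
    exact ⟨cs, hcs, hecs, List.Subset.trans hsub fun z => by simp; tauto⟩
  · obtain ⟨cs, hcs, hecs, hsub⟩ :=
      ih _ (by simp; omega) houter (by simp at he hex ⊢; tauto) rfl
    exact ⟨cs, hcs, hecs, List.Subset.trans hsub fun z => by simp; tauto⟩

section Cycles

variable {cs cs' : List (Fin r)} {e f : Fin r}

lemma IsCycle.eq_of_tgt_eq (h : IsCycle src tgt cs) (he : e ∈ cs) (hf : f ∈ cs)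
    (hef : tgt e = tgt f) : e = f := by
  obtain ⟨-, ⟨_, hw⟩, hnd⟩ := h
  exact List.inj_on_of_nodup_map (hw.perm_map_tgt_map_src.nodup_iff.2 hnd) he hf hef

lemma IsCycle.exists_src_eq_tgt (h : IsCycle src tgt cs) (he : e ∈ cs) :
    ∃ f ∈ cs, src f = tgt e := by
  obtain ⟨-, ⟨_, hw⟩, -⟩ := h
  simpa using hw.perm_map_tgt_map_src.subset (List.mem_map_of_mem he)

variable (src tgt) in
def HasUniqueCycles : Prop :=
  ∀ e : Fin r, ∃! Cyc : Finset (Fin r), ∃ es, IsCycle src tgt es ∧ es.toFinset = Cyc ∧ e ∈ es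

lemma HasUniqueCycles.mem_of_mem (hG : HasUniqueCycles src tgt) (hc : IsCycle src tgt cs)
    (hc' : IsCycle src tgt cs') (he : e ∈ cs) (he' : e ∈ cs') (hf : f ∈ cs') : f ∈ cs := by
  obtain ⟨_, -, huniq⟩ := hG e
  have : cs.toFinset = cs'.toFinset :=
    (huniq _ ⟨cs, hc, rfl, he⟩).trans (huniq _ ⟨cs', hc', rfl, he'⟩).symm
  rwa [← List.mem_toFinset, this, List.mem_toFinset]

/-- `φ e` is the edge after `e` on its cycle. -/
lemma HasUniqueCycles.exists_injective_src_eq_tgt (hG : HasUniqueCycles src tgt) :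
    ∃ φ : Fin r → Fin r, Function.Injective φ ∧ ∀ e, src (φ e) = tgt e := by
  have hnext : ∀ e, ∃ cs f, IsCycle src tgt cs ∧ e ∈ cs ∧ f ∈ cs ∧ src f = tgt e := fun e => by
    obtain ⟨_, ⟨cs, hcs, -, he⟩, -⟩ := hG e
    obtain ⟨f, hf, hsrc⟩ := hcs.exists_src_eq_tgt he
    exact ⟨cs, f, hcs, he, hf, hsrc⟩
  choose cyc φ hcyc hmem hφ hsrc using hnext
  refine ⟨φ, fun e₁ e₂ h => ?_, hsrc⟩
  have he₂ : e₂ ∈ cyc e₁ := hG.mem_of_mem (hcyc e₁) (hcyc e₂) (hφ e₁) (h ▸ hφ e₂) (hmem e₂)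
  exact (hcyc e₁).eq_of_tgt_eq (hmem e₁) he₂ (by rw [← hsrc, ← hsrc, h])

end Cycles

lemma card_enter_eq_card_leave {φ : Fin r → Fin r} (hφ : Function.Injective φ)
    (hsrc : ∀ e, src (φ e) = tgt e) (S : Fin n → Prop) [DecidablePred S] :
    #{e | S (tgt e) ∧ ¬ S (src e)} = #{e | S (src e) ∧ ¬ S (tgt e)} := by
  have hin_out : #{e | S (tgt e)} = #{e | S (src e)} :=
    card_equiv (Equiv.ofBijective φ hφ.bijective_of_finite) (by simp [hsrc])
  have htgt := card_filter_add_card_filter_not (s := {e | S (tgt e)}) (fun e => S (src e))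
  have hsrc' := card_filter_add_card_filter_not (s := {e | S (src e)}) (fun e => S (tgt e))
  have hboth : #{e | S (tgt e) ∧ S (src e)} = #{e | S (src e) ∧ S (tgt e)} := by
    simp only [and_comm]
  simp only [filter_filter] at htgt hsrc'
  omega

section Dominators

variable (src tgt) in
def Dominates (ρ w u : Fin n) : Prop :=
  ∀ es, IsWalk src tgt ρ u es → w ∈ ρ :: es.map tgt

variable {ρ u v w : Fin n}

lemma dominates_refl (u : Fin n) : Dominates src tgt ρ u u :=
  fun _ h => h.end_mem_support

lemma not_dominates_iff :
    ¬ Dominates src tgt ρ w u ↔ ∃ es, IsWalk src tgt ρ u es ∧ w ∉ ρ :: es.map tgt := by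
  simp [Dominates]

lemma not_dominates_of_isWalk (h : IsWalk src tgt ρ u es) (hw : w ∉ ρ :: es.map tgt) :
    ¬ Dominates src tgt ρ w u :=
  not_dominates_iff.2 ⟨es, h, hw⟩

lemma not_dominates_root (hw : w ≠ ρ) : ¬ Dominates src tgt ρ w ρ :=
  not_dominates_of_isWalk (es := []) rfl (by simpa using hw)

lemma not_dominates_tgt {e : Fin r} (he : ¬ Dominates src tgt ρ w (src e)) (hw : tgt e ≠ w) :
    ¬ Dominates src tgt ρ w (tgt e) := by
  obtain ⟨es, h, hes⟩ := not_dominates_iff.1 he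
  refine not_dominates_of_isWalk
    (isWalk_append.2 ⟨_, h, show IsWalk src tgt (src e) (tgt e) [e] from ⟨rfl, rfl⟩⟩) ?_
  simp_all [eq_comm]

lemma Dominates.trans (hvw : Dominates src tgt ρ v w) (hwu : Dominates src tgt ρ w u) :
    Dominates src tgt ρ v u := by
  intro es h
  rcases h.exists_first_visit (· = w) ⟨w, hwu es h, rfl⟩ with rfl | ⟨es₁, g, es₂, rfl, h₁, rfl, -⟩
  · exact List.mem_cons.2 (.inl (by simpa using hvw [] rfl))
  · have := hvw (es₁ ++ [g]) (isWalk_append.2 ⟨_, h₁, rfl, rfl⟩)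
    simp only [List.map_append, List.map_cons, List.map_nil, List.mem_cons,
      List.mem_append] at this ⊢
    tauto

lemma Dominates.antisymm (hconn : ∀ a b : Fin n, ∃ es, IsWalk src tgt a b es)
    (hwu : Dominates src tgt ρ w u) (huw : Dominates src tgt ρ u w) : w = u := by
  by_contra hne
  obtain ⟨es, h⟩ := hconn ρ u
  -- whichever of `u`, `w` a walk from `ρ` reaches first is reached avoiding the other
  rcases h.exists_first_visit (fun v => v = u ∨ v = w) ⟨u, h.end_mem_support, .inl rfl⟩ with
    (rfl | rfl) | ⟨es₁, g, -, -, h₁, (hg | hg), hav⟩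
  · exact not_dominates_root hne hwu
  · exact not_dominates_root (Ne.symm hne) huw
  · exact not_dominates_tgt (not_dominates_of_isWalk h₁ fun hm => hav w hm (.inr rfl))
      (hg ▸ Ne.symm hne) (hg ▸ hwu)
  · exact not_dominates_tgt (not_dominates_of_isWalk h₁ fun hm => hav u hm (.inl rfl))
      (hg ▸ hne) (hg ▸ huw)

open Classical in
lemma card_dominators_lt {ρ w u : Fin n} (hconn : ∀ a b : Fin n, ∃ es, IsWalk src tgt a b es)
    (h : Dominates src tgt ρ w u) (hne : w ≠ u) :
    #{v | Dominates src tgt ρ v w} < #{v | Dominates src tgt ρ v u} := by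
  refine card_lt_card ((ssubset_iff_of_subset fun v hv => ?_).2 ⟨u, ?_, ?_⟩)
  · simp only [mem_filter, mem_univ, true_and] at hv ⊢
    exact hv.trans h
  · simpa using dominates_refl u
  · simpa using fun huw => hne (h.antisymm hconn huw)

lemma exists_enter (hconn : ∀ a b : Fin n, ∃ es, IsWalk src tgt a b es) (hw : w ≠ ρ) :
    ∃ e, tgt e = w ∧ ¬ Dominates src tgt ρ w (src e) := by
  obtain ⟨es, h⟩ := hconn ρ w
  rcases h.exists_first_visit (· = w) ⟨w, h.end_mem_support, rfl⟩ with
    hρ | ⟨_, g, -, -, h₁, hg, hav⟩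
  · exact absurd hρ.symm hw
  · exact ⟨g, hg, not_dominates_of_isWalk h₁ fun hm => hav w hm rfl⟩

lemma enter_unique (hconn : ∀ a b : Fin n, ∃ es, IsWalk src tgt a b es)
    (hG : HasUniqueCycles src tgt) (hw : w ≠ ρ) {e₁ e₂ : Fin r}
    (h₁ : tgt e₁ = w ∧ ¬ Dominates src tgt ρ w (src e₁))
    (h₂ : tgt e₂ = w ∧ ¬ Dominates src tgt ρ w (src e₂)) : e₁ = e₂ := by
  obtain ⟨W, hW⟩ := hconn w ρ
  obtain ⟨_ | ⟨q, Q⟩, hQ, hQw⟩ := hW.exists_isWalk_not_revisit (List.mem_cons_self ..)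
  · exact absurd hQ hw
  -- the cycle of an edge entering `w` from outside leaves `w` along `q`
  have hcycle : ∀ e, tgt e = w → ¬ Dominates src tgt ρ w (src e) →
      ∃ cs, IsCycle src tgt cs ∧ e ∈ cs ∧ q ∈ cs := by
    intro e het hed
    obtain ⟨P, hP, hPw⟩ := not_dominates_iff.1 hed
    have hZ : IsWalk src tgt w w (q :: Q ++ (P ++ [e])) :=
      isWalk_append.2 ⟨ρ, hQ, isWalk_append.2 ⟨_, hP, rfl, het⟩⟩
    obtain ⟨cs, hcs, hecs, hsub⟩ := hZ.exists_isCycle (e := e) (by simp)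
    obtain ⟨f, hf, hfe⟩ := hcs.exists_src_eq_tgt hecs
    rw [het] at hfe
    refine ⟨cs, hcs, hecs, ?_⟩
    rcases List.mem_append.1 (hsub hf) with hfQ | hfP
    · rcases List.mem_cons.1 hfQ with rfl | hfQ
      · exact hf
      · exact absurd (hfe ▸ hQ.2.src_mem_support hfQ) (by simpa using hQw)
    · rcases List.mem_append.1 hfP with hfP | hfe'
      · exact absurd (hfe ▸ hP.src_mem_support hfP) hPw
      · obtain rfl : f = e := by simpa using hfe'
        exact absurd (by rw [hfe]; exact dominates_refl w) hed
  obtain ⟨c₁, hc₁, he₁, hq₁⟩ := hcycle e₁ h₁.1 h₁.2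
  obtain ⟨c₂, hc₂, he₂, hq₂⟩ := hcycle e₂ h₂.1 h₂.2
  exact hc₁.eq_of_tgt_eq he₁ (hG.mem_of_mem hc₁ hc₂ hq₁ hq₂ he₂) (h₁.1.trans h₂.1.symm)

lemma existsUnique_enter (hconn : ∀ a b : Fin n, ∃ es, IsWalk src tgt a b es)
    (hG : HasUniqueCycles src tgt) (hw : w ≠ ρ) :
    ∃! e, Dominates src tgt ρ w (tgt e) ∧ ¬ Dominates src tgt ρ w (src e) := by
  have htgt : ∀ e, Dominates src tgt ρ w (tgt e) → ¬ Dominates src tgt ρ w (src e) → tgt e = w :=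
    fun e ht hs => by_contra fun hne => not_dominates_tgt hs hne ht
  obtain ⟨e, he, hes⟩ := exists_enter hconn hw
  exact ⟨e, ⟨by rw [he]; exact dominates_refl w, hes⟩, fun e' ⟨ht, hs⟩ =>
    enter_unique hconn hG hw ⟨htgt e' ht hs, hs⟩ ⟨he, hes⟩⟩

end Dominators

lemma Matrix.det_ne_zero_of_ne_zero_imp_lt {ι R : Type*} [Fintype ι] [DecidableEq ι]
    [CommRing R] [IsDomain R] (M : Matrix ι ι R) (f : ι → ℕ) (hdiag : ∀ i, M i i ≠ 0)
    (hlt : ∀ i j, i ≠ j → M i j ≠ 0 → f i < f j) : M.det ≠ 0 := by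
  have hM : M.BlockTriangular f := fun i j hji => by
    by_contra h
    exact (hlt i j (by rintro rfl; exact hji.false) h).asymm hji
  rw [hM.det]
  refine Finset.prod_ne_zero_iff.2 fun k _ => ?_
  have hblock : M.toSquareBlock f k = diagonal fun i => M i.1 i.1 := by
    ext ⟨i, hi⟩ ⟨j, hj⟩
    by_cases hij : i = j
    · subst hij; simp [toSquareBlock, toSquareBlockProp]
    · have : M i j = 0 := by_contra fun h => (hlt i j hij h).ne (hi.trans hj.symm)
      simp [toSquareBlock, toSquareBlockProp, hij, this]
  rw [hblock, det_diagonal]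
  exact Finset.prod_ne_zero_iff.2 fun i _ => hdiag i

lemma vecMul_incidence_apply (x : Fin n → ℚ) (e : Fin r) :
    (x ᵥ* incidence src tgt) e = x (tgt e) - x (src e) := by
  simp [vecMul, dotProduct, incidence, mul_sub, Finset.sum_sub_distrib]

lemma exists_pos_neg_vecMul_incidence (S : Fin n → Prop) [DecidablePred S]
    (henter : ∃! e, S (tgt e) ∧ ¬ S (src e)) (hleave : ∃! e, S (src e) ∧ ¬ S (tgt e)) :
    ∃ j₁ j₂ : Fin r, j₁ ≠ j₂ ∧
      0 < ((fun u => if S u then 1 else 0) ᵥ* incidence src tgt) j₁ ∧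
      ((fun u => if S u then 1 else 0) ᵥ* incidence src tgt) j₂ < 0 ∧
      ∀ j, j ≠ j₁ → j ≠ j₂ → ((fun u => if S u then 1 else 0) ᵥ* incidence src tgt) j = 0 := by
  obtain ⟨j₁, ⟨ht₁, hs₁⟩, huniq₁⟩ := henter
  obtain ⟨j₂, ⟨hs₂, ht₂⟩, huniq₂⟩ := hleave
  refine ⟨j₁, j₂, fun h => ht₂ (h ▸ ht₁), by simp [vecMul_incidence_apply, *],
    by simp [vecMul_incidence_apply, *], fun j hj₁ hj₂ => ?_⟩
  have h₁ := mt (huniq₁ j) hj₁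
  have h₂ := mt (huniq₂ j) hj₂
  simp only [vecMul_incidence_apply]
  split_ifs <;> simp_all

open Classical in
/-- `ρ` dominates every vertex, so its row is replaced by the unit row at `ρ`. -/
noncomputable def dominatorMatrix (src tgt : Fin r → Fin n) (ρ : Fin n) :
    Matrix (Fin n) (Fin n) ℚ :=
  (of fun w u => if Dominates src tgt ρ w u then 1 else 0).updateRow ρ (Pi.single ρ 1)

open Classical in
lemma dominatorMatrix_of_ne {ρ w : Fin n} (hw : w ≠ ρ) :
    dominatorMatrix src tgt ρ w = fun u => if Dominates src tgt ρ w u then 1 else 0 :=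
  updateRow_ne hw

open Classical in
lemma det_dominatorMatrix_ne_zero (hconn : ∀ a b : Fin n, ∃ es, IsWalk src tgt a b es)
    (ρ : Fin n) : (dominatorMatrix src tgt ρ).det ≠ 0 := by
  refine det_ne_zero_of_ne_zero_imp_lt _ (fun u => #{v | Dominates src tgt ρ v u})
    (fun u => ?_) (fun w u hwu hK => ?_)
  · by_cases hu : u = ρ
    · simp [dominatorMatrix, hu]
    · simp [dominatorMatrix_of_ne hu, dominates_refl]
  · by_cases hw : w = ρ
    · simp [dominatorMatrix, hw, Pi.single_apply] at hK
      exact absurd (hw.trans hK.symm) hwu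
    · simp only [dominatorMatrix_of_ne hw, ne_eq, ite_eq_right_iff, not_forall] at hK
      exact card_dominators_lt hconn hK.1 hwu

/-- For a directed cactus graph (strongly connected, each edge in exactly one
directed cycle) there is an invertible rational matrix K such that each of the
first n−1 rows of K·I_G has exactly two nonzero entries, of opposite signs. -/
theorem stmt_5 {n r : ℕ} (src tgt : Fin r → Fin n)
    (hconn : ∀ a b : Fin n, ∃ es, IsWalk src tgt a b es)
    (hcactus : ∀ e : Fin r, ∃! Cyc : Finset (Fin r),
      ∃ es, IsCycle src tgt es ∧ es.toFinset = Cyc ∧ e ∈ es) :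
    ∃ K : Matrix (Fin n) (Fin n) ℚ, IsUnit K.det ∧
      ∀ i : Fin n, (i : ℕ) < n - 1 →
        ∃ j1 j2 : Fin r, j1 ≠ j2 ∧
          0 < (K * incidence src tgt) i j1 ∧
          (K * incidence src tgt) i j2 < 0 ∧
          ∀ j, j ≠ j1 → j ≠ j2 → (K * incidence src tgt) i j = 0 := by
  classical
  rcases n with _ | n
  · exact ⟨1, by simp, fun i => i.elim0⟩
  let ρ := Fin.last n
  refine ⟨dominatorMatrix src tgt ρ, (det_dominatorMatrix_ne_zero hconn ρ).isUnit, fun i hi => ?_⟩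
  have hiρ : i ≠ ρ := fun h => by simp [h, ρ] at hi
  have hrow : ∀ j, (dominatorMatrix src tgt ρ * incidence src tgt) i j =
      (dominatorMatrix src tgt ρ i ᵥ* incidence src tgt) j := fun _ => rfl
  rw [dominatorMatrix_of_ne hiρ] at hrow
  obtain ⟨φ, hφ, hsrc⟩ := HasUniqueCycles.exists_injective_src_eq_tgt hcactus
  have henter := existsUnique_enter hconn hcactus hiρ
  have hleave : ∃! e, Dominates src tgt ρ i (src e) ∧ ¬ Dominates src tgt ρ i (tgt e) := by
    rw [Fintype.existsUnique_iff_card_one] at henter ⊢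
    rwa [← card_enter_eq_card_leave hφ hsrc]
  simpa only [hrow] using exists_pos_neg_vecMul_incidence _ henter hleave
end

section
/- Let N' ∈ Z^{s×r'} be the stoichiometric matrix of a consistent reaction network G' with positive kernel vector v'. Let G be obtained from G' by deleting the reaction y → y' (the r'-th) and adding the three reactions y → U, U → y, U → y' for a new species U. Then the vector v which agrees with v' on the retained reactions, equals 2v'_{r'} on the reaction y → U, and equals v'_{r'} on each of U → y and U → y', lies in the kernel of the stoichiometric matrix of G and is strictly positive. Hence G is consistent. -/
/-- Deleting a reaction y → y' and adding y → U, U → y, U → y' preserves consistency: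
the explicit vector (v' on retained reactions, 2v'_{r'} on y → U and v'_{r'} on each of
U → y, U → y') is positive and lies in the kernel of the new stoichiometric matrix. -/
theorem stmt_10 {s r' : ℕ} (N' : Matrix (Fin s) (Fin r') ℝ) (v' : Fin r' → ℝ)
    (hv' : ∀ i, 0 < v' i) (hker : N'.mulVec v' = 0)
    (i0 : Fin r') (y y' : Fin s → ℝ) (hcol : ∀ j, N' j i0 = y' j - y j)
    (N : Matrix (Fin s ⊕ Unit) ({i : Fin r' // i ≠ i0} ⊕ Fin 3) ℝ)
    (hN1 : ∀ j (i : {i : Fin r' // i ≠ i0}), N (Sum.inl j) (Sum.inl i) = N' j i)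
    (hN2 : ∀ (i : {i : Fin r' // i ≠ i0}), N (Sum.inr ()) (Sum.inl i) = 0)
    -- reaction y → U
    (hN3 : ∀ j, N (Sum.inl j) (Sum.inr 0) = -(y j))
    (hN4 : N (Sum.inr ()) (Sum.inr 0) = 1)
    -- reaction U → y
    (hN5 : ∀ j, N (Sum.inl j) (Sum.inr 1) = y j)
    (hN6 : N (Sum.inr ()) (Sum.inr 1) = -1)
    -- reaction U → y'
    (hN7 : ∀ j, N (Sum.inl j) (Sum.inr 2) = y' j)
    (hN8 : N (Sum.inr ()) (Sum.inr 2) = -1) :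
    (∀ e, 0 < Sum.elim (fun i : {i : Fin r' // i ≠ i0} => v' i)
        (fun t : Fin 3 => if t = 0 then 2 * v' i0 else v' i0) e) ∧
    N.mulVec (Sum.elim (fun i : {i : Fin r' // i ≠ i0} => v' i)
        (fun t : Fin 3 => if t = 0 then 2 * v' i0 else v' i0)) = 0 := by
  constructor
  · rintro (i | t)
    · exact hv' i
    · by_cases ht : t = 0 <;> simp [ht] <;> nlinarith [hv' i0]
  · funext x
    have hsub : ∀ (f : Fin r' → ℝ),
        (∑ i : {i : Fin r' // i ≠ i0}, f i) = (∑ i, f i) - f i0 := by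
      intro f
      rw [← Finset.sum_subtype ({i0}ᶜ : Finset (Fin r')) (fun i => by simp) f]
      have h2 := Fintype.sum_eq_sum_compl_add i0 f
      linarith
    cases x with
    | inl j =>
      have hk := congrFun hker j
      simp only [Matrix.mulVec, dotProduct, Pi.zero_apply] at hk ⊢
      rw [Fintype.sum_sum_type]
      simp only [Sum.elim_inl, Sum.elim_inr, hN1, Fin.sum_univ_three, hN3, hN5, hN7, if_pos rfl, if_neg (by decide : ¬(1:Fin 3)=0), if_neg (by decide : ¬(2:Fin 3)=0)]
      norm_num
      rw [hsub (fun i => N' j i * v' i)]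
      rw [hk, hcol j]
      ring
    | inr u =>
      cases u
      simp only [Matrix.mulVec, dotProduct, Pi.zero_apply]
      rw [Fintype.sum_sum_type]
      simp only [Sum.elim_inl, Sum.elim_inr, hN2, Fin.sum_univ_three, hN4, hN6, hN8, if_pos rfl, if_neg (by decide : ¬(1:Fin 3)=0), if_neg (by decide : ¬(2:Fin 3)=0)]
      simp only [zero_mul, Finset.sum_const_zero, if_true]
      ring
end

section
/- Let 0 < m < n be integers and consider the 3×(n+3) integer matrices A and W defined as follows (columns indexed by S_0,…,S_n, E, F): the column of A at S_ℓ is (1, 0, 0)^t for 0 ≤ ℓ < m, (1, 1, −1)^t for m ≤ ℓ < n, (1, 2, −2)^t at S_n, (0,1,0)^t at E, and (0,0,1)^t at F; the column of W at every S_ℓ is (1,0,0)^t, at E is (0,1,0)^t, and at F is (0,0,1)^t. Then for every 3-element subset J of column indices, det(W_J) · det(A_J) ≥ 0. -/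
/-!
If `W_J` is singular there is nothing to prove; this happens as soon as `J` contains two
species `S_ℓ`, whose `W`-columns agree. Otherwise `J` meets the `S`-columns in at most one
`S_ℓ`, and `A_J = P W_J` for the unipotent shear `P` sending `e₁` to the `A`-column
`(1, a, -a)` of that `S_ℓ` and fixing `e₂`, `e₃`; hence `det A_J = det W_J`.
-/

open Matrix

theorem Matrix.eq_mul_of_forall_col_eq_mulVec {ι κ R : Type*} [Fintype ι] [CommSemiring R]
    {A W : Matrix ι κ R} {P : Matrix ι ι R}
    (h : ∀ j, (fun i => A i j) = P *ᵥ fun i => W i j) : A = P * W := by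
  ext i j
  exact congrFun (h j) i

theorem Matrix.det_mul_det_mul_nonneg {ι R : Type*} [Fintype ι] [DecidableEq ι] [CommRing R]
    [LinearOrder R] [IsStrictOrderedRing R] {P : Matrix ι ι R} (hP : 0 ≤ P.det)
    (W : Matrix ι ι R) : 0 ≤ W.det * (P * W).det := by
  rw [det_mul, mul_left_comm]
  exact mul_nonneg hP (mul_self_nonneg _)

def shear (a : ℚ) : Matrix (Fin 3) (Fin 3) ℚ := !![1, 0, 0; a, 1, 0; -a, 0, 1]

theorem det_shear (a : ℚ) : (shear a).det = 1 := by
  simp [shear, det_fin_three]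

/-- The `a` for which the `A`-column of `S_c` is `(1, a, -a)`. -/
def speciesLevel (m n c : ℕ) : ℚ := if c < m then 0 else if c < n then 1 else 2

section Columns

variable {m n : ℕ} {A W : Matrix (Fin 3) (Fin (n + 3)) ℚ}
  (hA : ∀ c : Fin (n + 3), (fun i => A i c) =
    if (c : ℕ) < m then ![1, 0, 0]
    else if (c : ℕ) < n then ![1, 1, -1]
    else if (c : ℕ) = n then ![1, 2, -2]
    else if (c : ℕ) = n + 1 then ![0, 1, 0]
    else ![0, 0, 1])
  (hW : ∀ c : Fin (n + 3), (fun i => W i c) =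
    if (c : ℕ) ≤ n then ![1, 0, 0]
    else if (c : ℕ) = n + 1 then ![0, 1, 0]
    else ![0, 0, 1])

include hW in
theorem col_eq_of_le {c c' : Fin (n + 3)} (hc : (c : ℕ) ≤ n) (hc' : (c' : ℕ) ≤ n) (i : Fin 3) :
    W i c = W i c' := by
  have hci := congrFun (hW c) i
  have hc'i := congrFun (hW c') i
  rw [if_pos hc] at hci
  rw [if_pos hc'] at hc'i
  exact hci.trans hc'i.symm

include hA hW

theorem col_eq_shear_mulVec_of_le {c : Fin (n + 3)} (hc : (c : ℕ) ≤ n) :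
    (fun i => A i c) = shear (speciesLevel m n c) *ᵥ fun i => W i c := by
  rw [hA, hW, if_pos hc]
  unfold speciesLevel
  split_ifs <;> first | omega | (ext i; fin_cases i <;> simp [shear])

theorem col_eq_shear_mulVec_of_lt (hmn : m < n) {c : Fin (n + 3)} (hc : n < (c : ℕ)) (a : ℚ) :
    (fun i => A i c) = shear a *ᵥ fun i => W i c := by
  rw [hA, hW, if_neg (by omega : ¬ (c : ℕ) ≤ n), if_neg (by omega : ¬ (c : ℕ) < m),
    if_neg (by omega : ¬ (c : ℕ) < n), if_neg (by omega : (c : ℕ) ≠ n)]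
  split_ifs <;> (ext i; fin_cases i <;> simp [shear])

end Columns

theorem stmt_12_general (m n : ℕ) (hmn : m < n)
    (A W : Matrix (Fin 3) (Fin (n + 3)) ℚ)
    (hA : ∀ c : Fin (n + 3), (fun i => A i c) =
      if (c : ℕ) < m then ![1, 0, 0]
      else if (c : ℕ) < n then ![1, 1, -1]
      else if (c : ℕ) = n then ![1, 2, -2]
      else if (c : ℕ) = n + 1 then ![0, 1, 0]
      else ![0, 0, 1])
    (hW : ∀ c : Fin (n + 3), (fun i => W i c) =
      if (c : ℕ) ≤ n then ![1, 0, 0]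
      else if (c : ℕ) = n + 1 then ![0, 1, 0]
      else ![0, 0, 1])
    (J : Finset (Fin (n + 3))) (e : Fin 3 ≃ {x // x ∈ J}) :
    0 ≤ (W.submatrix id (fun i => (e i : Fin (n + 3)))).det *
        (A.submatrix id (fun i => (e i : Fin (n + 3)))).det := by
  set c : Fin 3 → Fin (n + 3) := fun j => e j
  by_cases h : ∃ a, ∀ j, (c j : ℕ) ≤ n → speciesLevel m n (c j) = a
  · obtain ⟨a, ha⟩ := h
    have hAW : A.submatrix id c = shear a * W.submatrix id c := by
      refine eq_mul_of_forall_col_eq_mulVec fun j => ?_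
      rcases le_or_gt (c j : ℕ) n with hj | hj
      · rw [← ha j hj]
        exact col_eq_shear_mulVec_of_le hA hW hj
      · exact col_eq_shear_mulVec_of_lt hA hW hmn hj a
    rw [hAW]
    exact det_mul_det_mul_nonneg (zero_le_one.trans_eq (det_shear a).symm) _
  · push Not at h
    obtain ⟨j₀, hj₀, -⟩ := h 0
    obtain ⟨j₁, hj₁, hlevel⟩ := h (speciesLevel m n (c j₀))
    have hW₀ : (W.submatrix id c).det = 0 :=
      det_zero_of_column_eq (fun hj => hlevel (by rw [hj])) fun i => col_eq_of_le hW hj₁ hj₀ i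
    rw [hW₀, zero_mul]

/-- Minor sign condition for the network C_I with I = {0, m, n}: for the exponent
matrix A and conservation-law matrix W (columns indexed by S_0,…,S_n, E, F), all
products of corresponding maximal minors are nonnegative. -/
theorem stmt_12 (m n : ℕ) (h0 : 0 < m) (hmn : m < n)
    (A W : Matrix (Fin 3) (Fin (n + 3)) ℚ)
    (hA : ∀ c : Fin (n + 3), (fun i => A i c) =
      if (c : ℕ) < m then ![1, 0, 0]
      else if (c : ℕ) < n then ![1, 1, -1]
      else if (c : ℕ) = n then ![1, 2, -2]
      else if (c : ℕ) = n + 1 then ![0, 1, 0]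
      else ![0, 0, 1])
    (hW : ∀ c : Fin (n + 3), (fun i => W i c) =
      if (c : ℕ) ≤ n then ![1, 0, 0]
      else if (c : ℕ) = n + 1 then ![0, 1, 0]
      else ![0, 0, 1])
    (J : Finset (Fin (n + 3))) (hJ : J.card = 3) (e : Fin 3 ≃ {x // x ∈ J}) :
    0 ≤ (W.submatrix id (fun i => (e i : Fin (n + 3)))).det *
        (A.submatrix id (fun i => (e i : Fin (n + 3)))).det :=
  stmt_12_general m n hmn A W hA hW J e
end

section
/- Let G' be a reaction network and let G be an extension of G' by one intermediate species U with reactions y ⇌ U (rate constants κ₁ for y → U and κ₂ for U → y) where y is a complex of G'. Then the projection (x,u) ↦ x gives a bijection between the positive steady states of the mass-action system of G with rate constants (κ, κ₁, κ₂) and the positive steady states of the mass-action system of G' with rate constants κ; the inverse sends x to (x, (κ₁/κ₂)·x^y). -/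
/-- For the canonical extension y ⇌ U of a network G' with vector field f', the
projection (x,u) ↦ x is a bijection between positive steady states of the extension
and positive steady states of G', with inverse x ↦ (x, (κ₁/κ₂)·x^y). -/
theorem stmt_15 {n : ℕ} (f' : (Fin n → ℝ) → (Fin n → ℝ))
    (y : Fin n → ℕ) (κ1 κ2 : ℝ) (h1 : 0 < κ1) (h2 : 0 < κ2)
    (x : Fin n → ℝ) (u : ℝ) :
    ((∀ j, 0 < x j) ∧ 0 < u ∧
      (∀ j, f' x j + (κ2 * u - κ1 * ∏ l, x l ^ y l) * (y j : ℝ) = 0) ∧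
      κ1 * (∏ l, x l ^ y l) - κ2 * u = 0)
    ↔ ((∀ j, 0 < x j) ∧ f' x = 0 ∧ u = (κ1 / κ2) * ∏ l, x l ^ y l) := by
  constructor
  · rintro ⟨hx, hu, hss, heq⟩
    have hu' : u = (κ1 / κ2) * ∏ l, x l ^ y l := by
      field_simp
      linarith
    refine ⟨hx, ?_, hu'⟩
    funext j
    have := hss j
    have hz : κ2 * u - κ1 * ∏ l, x l ^ y l = 0 := by linarith
    rw [hz] at this
    simpa using this
  · rintro ⟨hx, hf, hu⟩
    have hp : 0 < ∏ l, x l ^ y l := Finset.prod_pos fun l _ => pow_pos (hx l) _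
    have hu2 : κ2 * u = κ1 * ∏ l, x l ^ y l := by
      rw [hu]; field_simp
    refine ⟨hx, ?_, ?_, by linarith⟩
    · rw [hu]; positivity
    · intro j
      have : f' x j = 0 := by rw [hf]; rfl
      rw [this, hu2]
      ring
end

section
/- Let ℓ : R^n → R be a linear form and y^{(1)},…,y^{(p)} ∈ R^n. Define ℓ̄ : R^n × R^p → R by ℓ̄(x,u) = ℓ(x) + Σ_{k=1}^p ℓ(y^{(k)}) u_k. Suppose x ∈ R^n_{≥0}, u ∈ R^p_{≥0}, and (x⁰, u⁰) ∈ R^n_{>0} × R^p_{>0} satisfy ℓ̄(x,u) = ℓ̄(x⁰,u⁰), and suppose u_k = μ_k x^{y^{(k)}} for positive constants μ_k, where the supports satisfy: x^{y^{(k)}} ≠ 0 implies {j : y^{(k)}_j ≠ 0} ⊆ {j : x_j > 0}. Set v⁰ = x⁰ + Σ_k (u⁰_k − μ_k x^{y^{(k)}}) y^{(k)} and v_α = α v⁰ + (1−α) x. Then ℓ(x) = ℓ(v⁰), and there exists α₀ ∈ (0,1] such that v_{α₀} ∈ R^n_{>0}; in particular there is a strictly positive point (x')⁰ with ℓ(x)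 = ℓ((x')⁰). -/
/-!
Eliminating `u` from the conservation law `ℓ̄(x, u) = ℓ̄(x⁰, u⁰)` with the linearity of `ℓ`
gives `ℓ(x) = ℓ(v⁰)`. Positivity of the segment comes from the support condition: where
`x_j = 0`, every `y^{(k)}` with `y^{(k)}_j ≠ 0` has `x^{y^{(k)}} = 0`, so each summand of
`v⁰_j - x⁰_j` is `u⁰_k y^{(k)}_j ≥ 0` and `v⁰_j > 0`. Hence in every coordinate `x_j > 0` or
`v⁰_j > 0`, and then `α v⁰ + (1 - α) x > 0` for all small `α > 0`.
-/

open Filter Topology Finset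

theorem LinearMap.map_eq_map_add_sum_smul_of_eq {R E ι : Type*} [CommRing R] [AddCommGroup E]
    [Module R E] [Fintype ι] (ℓ : E →ₗ[R] R) {x x₀ : E} (w : ι → E) {a b : ι → R}
    (h : ℓ x + ∑ k, ℓ (w k) * a k = ℓ x₀ + ∑ k, ℓ (w k) * b k) :
    ℓ x = ℓ (x₀ + ∑ k, (b k - a k) • w k) := by
  simp only [map_add, map_sum, map_smul, smul_eq_mul, sub_mul, sum_sub_distrib]
  simp only [mul_comm (ℓ _)] at h
  linear_combination h

theorem eventually_forall_pos_convexComb {ι : Type*} [Finite ι] {x v : ι → ℝ}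
    (hx : ∀ j, 0 ≤ x j) (hxv : ∀ j, 0 < x j ∨ 0 < v j) :
    ∀ᶠ α in 𝓝[>] (0 : ℝ), ∀ j, 0 < α * v j + (1 - α) * x j := by
  refine eventually_all.2 fun j => ?_
  rcases hxv j with hxj | hvj
  · have hlim : Tendsto (fun α : ℝ => α * v j + (1 - α) * x j) (𝓝 0) (𝓝 (x j)) := by
      have hcont : Continuous fun α : ℝ => α * v j + (1 - α) * x j := by fun_prop
      simpa using hcont.tendsto 0
    exact nhdsWithin_le_nhds (hlim.eventually (lt_mem_nhds hxj))
  · filter_upwards [Ioo_mem_nhdsGT one_pos] with α hα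
    exact add_pos_of_pos_of_nonneg (mul_pos hα.1 hvj) (mul_nonneg (sub_nonneg.2 hα.2.le) (hx j))

theorem pos_add_sum_of_monomial_support {ι κ : Type*} [Fintype ι] [Fintype κ]
    {y : κ → ι → ℕ} {μ u₀ : κ → ℝ} {x x₀ : ι → ℝ} {j : ι} (hxj : x j = 0) (hx₀ : 0 < x₀ j)
    (hu₀ : ∀ k, 0 < u₀ k)
    (hsupp : ∀ k, (∏ l, x l ^ y k l) ≠ 0 → ∀ j, y k j ≠ 0 → 0 < x j) :
    0 < x₀ j + ∑ k, (u₀ k - μ k * ∏ l, x l ^ y k l) * (y k j : ℝ) := by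
  refine add_pos_of_pos_of_nonneg hx₀ (sum_nonneg fun k _ => ?_)
  by_cases hy : y k j = 0
  · simp [hy]
  have hmono : ∏ l, x l ^ y k l = 0 := by
    by_contra hmono
    exact (hsupp k hmono j hy).ne' hxj
  rw [hmono, mul_zero, sub_zero]
  exact mul_nonneg (hu₀ k).le (Nat.cast_nonneg _)

theorem stmt_17_general {n p : ℕ} (ℓ : (Fin n → ℝ) →ₗ[ℝ] ℝ)
    (y : Fin p → Fin n → ℕ) (μ : Fin p → ℝ)
    (x : Fin n → ℝ) (hx : ∀ j, 0 ≤ x j)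
    (u : Fin p → ℝ)
    (x0 : Fin n → ℝ) (hx0 : ∀ j, 0 < x0 j)
    (u0 : Fin p → ℝ) (hu0' : ∀ k, 0 < u0 k)
    (hu : ∀ k, u k = μ k * ∏ j, x j ^ y k j)
    (hsupp : ∀ k, (∏ j, x j ^ y k j) ≠ 0 → ∀ j, y k j ≠ 0 → 0 < x j)
    (hcons : ℓ x + ∑ k, ℓ (fun j => (y k j : ℝ)) * u k
           = ℓ x0 + ∑ k, ℓ (fun j => (y k j : ℝ)) * u0 k) :
    ℓ x = ℓ (fun j => x0 j + ∑ k, (u0 k - μ k * ∏ l, x l ^ y k l) * (y k j : ℝ)) ∧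
    ∃ α ∈ Set.Ioc (0 : ℝ) 1, ∀ j,
      0 < α * (x0 j + ∑ k, (u0 k - μ k * ∏ l, x l ^ y k l) * (y k j : ℝ))
            + (1 - α) * x j := by
  set v : Fin n → ℝ := fun j => x0 j + ∑ k, (u0 k - μ k * ∏ l, x l ^ y k l) * (y k j : ℝ)
  have hv : v = x0 + ∑ k, (u0 k - μ k * ∏ l, x l ^ y k l) • fun j => (y k j : ℝ) := by
    funext j
    simp [v, Finset.sum_apply]
  have hxv : ∀ j, 0 < x j ∨ 0 < v j := fun j =>
    (hx j).lt_or_eq.imp_right fun hxj =>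
      pos_add_sum_of_monomial_support hxj.symm (hx0 j) hu0' hsupp
  obtain ⟨α, hpos, hα⟩ :=
    ((eventually_forall_pos_convexComb hx hxv).and (Ioc_mem_nhdsGT one_pos)).exists
  refine ⟨?_, α, hα, hpos⟩
  rw [hv]
  exact ℓ.map_eq_map_add_sum_smul_of_eq _ (by simpa only [hu] using hcons)

/-- Convexity/support lemma: from ℓ̄(x,u) = ℓ̄(x⁰,u⁰) with u_k = μ_k x^{y^{(k)}} one
gets ℓ(x) = ℓ(v⁰), and some point v_{α₀} on the segment from x to v⁰ is strictly
positive. -/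
theorem stmt_17 {n p : ℕ} (ℓ : (Fin n → ℝ) →ₗ[ℝ] ℝ)
    (y : Fin p → Fin n → ℕ) (μ : Fin p → ℝ) (hμ : ∀ k, 0 < μ k)
    (x : Fin n → ℝ) (hx : ∀ j, 0 ≤ x j)
    (u : Fin p → ℝ) (hu0 : ∀ k, 0 ≤ u k)
    (x0 : Fin n → ℝ) (hx0 : ∀ j, 0 < x0 j)
    (u0 : Fin p → ℝ) (hu0' : ∀ k, 0 < u0 k)
    (hu : ∀ k, u k = μ k * ∏ j, x j ^ y k j)
    (hsupp : ∀ k, (∏ j, x j ^ y k j) ≠ 0 → ∀ j, y k j ≠ 0 → 0 < x j)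
    (hcons : ℓ x + ∑ k, ℓ (fun j => (y k j : ℝ)) * u k
           = ℓ x0 + ∑ k, ℓ (fun j => (y k j : ℝ)) * u0 k) :
    ℓ x = ℓ (fun j => x0 j + ∑ k, (u0 k - μ k * ∏ l, x l ^ y k l) * (y k j : ℝ)) ∧
    ∃ α ∈ Set.Ioc (0 : ℝ) 1, ∀ j,
      0 < α * (x0 j + ∑ k, (u0 k - μ k * ∏ l, x l ^ y k l) * (y k j : ℝ))
            + (1 - α) * x j :=
  stmt_17_general ℓ y μ x hx u x0 hx0 u0 hu0' hu hsupp hcons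
end

section
/- Let W ∈ R^{d×n} be a matrix with rows w_1,…,w_d, let x ∈ R^n_{≥0}, x⁰ ∈ R^n_{>0} with Wx = Wx⁰, and let y^{(1)},…,y^{(p)} ∈ R^n_{≥0}, u ∈ R^p_{≥0}. Define W̄(x,u) = Wx + Σ_k u_k W y^{(k)}. Then there exist α₁,…,α_p > 0 with x⁰ − Σ_k α_k y^{(k)} ∈ R^n_{>0}, and setting (x⁰)' = x⁰ − Σ_k α_k y^{(k)} and (u⁰)'_k = u_k + α_k, the point ((x⁰)', (u⁰)') is strictly positive (in both factors) and satisfies W̄((x⁰)',(u⁰)') = W̄(x,u). -/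
open Filter Topology

theorem exists_pos_forall_sub_mul_pos {ι : Type*} [Finite ι] (a v : ι → ℝ)
    (ha : ∀ j, 0 < a j) : ∃ ε : ℝ, 0 < ε ∧ ∀ j, 0 < a j - ε * v j := by
  have hnear : ∀ j, ∀ᶠ ε in 𝓝 (0 : ℝ), 0 < a j - ε * v j := fun j =>
    ((continuous_const.sub (continuous_id.mul continuous_const)).tendsto' 0 (a j)
      (by simp)).eventually_const_lt (ha j)
  exact ((eventually_mem_nhdsWithin : ∀ᶠ ε in 𝓝[>] (0 : ℝ), ε ∈ Set.Ioi 0).and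
    (nhdsWithin_le_nhds (eventually_all.2 hnear))).exists

theorem Matrix.mulVec_sub_sum_mul_add_sum_add_smul {R m n ι : Type*} [CommRing R]
    [Fintype n] [Fintype ι] (W : Matrix m n R) (x : n → R) (y : ι → n → R) (u α : ι → R) :
    W.mulVec (fun j => x j - ∑ k, α k * y k j) + ∑ k, (u k + α k) • W.mulVec (y k)
      = W.mulVec x + ∑ k, u k • W.mulVec (y k) := by
  have hshift : (fun j => x j - ∑ k, α k * y k j) = x - ∑ k, α k • y k := by
    ext j
    simp [Finset.sum_apply]
  simp only [hshift, mulVec_sub, mulVec_sum, mulVec_smul, add_smul, Finset.sum_add_distrib]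
  abel

theorem stmt_18_general {d n p : ℕ} (W : Matrix (Fin d) (Fin n) ℝ)
    (x : Fin n → ℝ)
    (x0 : Fin n → ℝ) (hx0 : ∀ j, 0 < x0 j)
    (hW : W.mulVec x = W.mulVec x0)
    (y : Fin p → Fin n → ℝ)
    (u : Fin p → ℝ) (hu : ∀ k, 0 ≤ u k) :
    ∃ α : Fin p → ℝ, (∀ k, 0 < α k) ∧
      (∀ j, 0 < x0 j - ∑ k, α k * y k j) ∧
      (∀ k, 0 < u k + α k) ∧
      W.mulVec (fun j => x0 j - ∑ k, α k * y k j)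
          + ∑ k, (u k + α k) • W.mulVec (y k)
        = W.mulVec x + ∑ k, u k • W.mulVec (y k) := by
  obtain ⟨ε, hε, hpos⟩ := exists_pos_forall_sub_mul_pos x0 (fun j => ∑ k, y k j) hx0
  refine ⟨fun _ => ε, fun _ => hε, fun j => by simpa [Finset.mul_sum] using hpos j,
    fun k => by linarith [hu k], ?_⟩
  rw [W.mulVec_sub_sum_mul_add_sum_add_smul, hW]

/-- Lifting direction for relevant boundary steady states: given Wx = Wx⁰ with x⁰ > 0,
nonnegative complexes y^{(k)} and nonnegative u, there are small α_k > 0 so that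
(x⁰ − Σ α_k y^{(k)}, u + α) is strictly positive and has the same extended conserved
quantities as (x,u). -/
theorem stmt_18 {d n p : ℕ} (W : Matrix (Fin d) (Fin n) ℝ)
    (x : Fin n → ℝ) (hx : ∀ j, 0 ≤ x j)
    (x0 : Fin n → ℝ) (hx0 : ∀ j, 0 < x0 j)
    (hW : W.mulVec x = W.mulVec x0)
    (y : Fin p → Fin n → ℝ) (hy : ∀ k j, 0 ≤ y k j)
    (u : Fin p → ℝ) (hu : ∀ k, 0 ≤ u k) :
    ∃ α : Fin p → ℝ, (∀ k, 0 < α k) ∧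
      (∀ j, 0 < x0 j - ∑ k, α k * y k j) ∧
      (∀ k, 0 < u k + α k) ∧
      W.mulVec (fun j => x0 j - ∑ k, α k * y k j)
          + ∑ k, (u k + α k) • W.mulVec (y k)
        = W.mulVec x + ∑ k, u k • W.mulVec (y k) :=
  stmt_18_general W x x0 hx0 hW y u hu
end
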